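/- arXiv:1607.00355 — 4 statements merged into one kernel-verified Lean document; each statement's English description precedes it below -/
import Mathlib

section
/- For all u ∈ (0,1), the second derivative of φ satisfies 0 < φ''(u) < φ'(u)/u, where φ(u) = H((1 - √(1-u²))/2). -/
open Real

noncomputable def binEnt (q : ℝ) : ℝ := -(q * Real.logb 2 q) - (1 - q) * Real.logb 2 (1 - q)

noncomputable def Bh (q : ℝ) : ℝ := 2 * Real.sqrt (q * (1 - q))

noncomputable def phi (u : ℝ) : ℝ := binEnt ((1 - Real.sqrt (1 - u ^ 2)) / 2)

/-!
Write `s = √(1 - u²) ∈ (0, 1)`. Since `H'(q) = log₂ ((1 - q) / q)`, and `q = (1 - s) / 2` gives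
`(1 - q) / q = (1 + s) / (1 - s)`, the chain rule yields `φ'(u) = u artanh s / (s log 2)` and then
`φ''(u) = (artanh s - s) / (s³ log 2)`. Hence `φ'' > 0` says `s < artanh s`, and `φ'' < φ' / u`
says `artanh s < s / (1 - s²)`. Both follow from the Taylor series `artanh s = ∑ s^(2k+1) / (2k+1)`,
compared termwise with its first term and with the geometric series `∑ s^(2k+1)`.
-/

open Set Filter Topology

namespace Real

lemma artanh_eq_log_sub_log_div_two {x : ℝ} (hx : x ∈ Ioo (-1) 1) :
    artanh x = (log (1 + x) - log (1 - x)) / 2 := by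
  rw [artanh_eq_half_log (Ioo_subset_Icc_self hx),
    log_div (by linarith [hx.1]) (by linarith [hx.2])]
  ring

lemma hasSum_artanh {x : ℝ} (hx : |x| < 1) :
    HasSum (fun k : ℕ => x ^ (2 * k + 1) / (2 * k + 1)) (artanh x) := by
  rw [artanh_eq_log_sub_log_div_two (abs_lt.1 hx)]
  convert! (hasSum_log_sub_log_of_abs_lt_one hx).div_const 2 using 2 with k
  ring

lemma lt_artanh {x : ℝ} (hx₀ : 0 < x) (hx₁ : x < 1) : x < artanh x := by
  have hsum := sum_le_hasSum (Finset.range 2) (fun k _ ↦ by positivity)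
    (hasSum_artanh (abs_lt.2 ⟨by linarith, hx₁⟩))
  norm_num [Finset.sum_range_succ] at hsum
  linarith [pow_pos hx₀ 3]

lemma artanh_lt_div {x : ℝ} (hx₀ : 0 < x) (hx₁ : x < 1) : artanh x < x / (1 - x ^ 2) := by
  have hgeom : HasSum (fun k : ℕ => x ^ (2 * k + 1)) (x / (1 - x ^ 2)) := by
    have hodd : (fun k : ℕ => x ^ (2 * k + 1)) = fun k => x * (x ^ 2) ^ k := by
      funext k
      ring
    rw [hodd, div_eq_mul_inv]
    exact (hasSum_geometric_of_lt_one (by positivity) (by nlinarith)).mul_left x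
  refine hasSum_lt (f := fun k : ℕ => x ^ (2 * k + 1) / (2 * k + 1)) (i := 1) (fun k ↦ ?_) ?_
    (hasSum_artanh (abs_lt.2 ⟨by linarith, hx₁⟩)) hgeom
  · exact div_le_self (by positivity) (by linarith [k.cast_nonneg (α := ℝ)])
  · norm_num
    linarith [pow_pos hx₀ 3]

lemma hasDerivAt_artanh {x : ℝ} (hx : x ∈ Ioo (-1) 1) :
    HasDerivAt artanh (1 - x ^ 2)⁻¹ x := by
  have hp : 1 + x ≠ 0 := by linarith [hx.1]
  have hm : 1 - x ≠ 0 := by linarith [hx.2]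
  have hlog := ((((hasDerivAt_id x).const_add 1).log hp).sub
    (((hasDerivAt_id x).const_sub 1).log hm)).div_const 2
  refine (hlog.congr_deriv ?_).congr_of_eventuallyEq ?_
  · simp only [id]
    rw [show 1 - x ^ 2 = (1 + x) * (1 - x) by ring]
    field_simp
    ring
  · filter_upwards [isOpen_Ioo.mem_nhds hx] with y hy
    exact artanh_eq_log_sub_log_div_two hy

lemma hasDerivAt_binEntropy_one_sub_div_two {s : ℝ} (hs : s ∈ Ioo (-1) 1) :
    HasDerivAt binEntropy (2 * artanh s) ((1 - s) / 2) := by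
  obtain ⟨hs₀, hs₁⟩ := hs
  convert! hasDerivAt_binEntropy (p := (1 - s) / 2) (by linarith) (by linarith) using 1
  rw [artanh_eq_log_sub_log_div_two ⟨hs₀, hs₁⟩, show 1 - (1 - s) / 2 = (1 + s) / 2 by ring,
    log_div (by linarith) two_ne_zero, log_div (by linarith) two_ne_zero]
  ring

end Real

lemma binEnt_eq_binEntropy_div (p : ℝ) : binEnt p = binEntropy p / log 2 := by
  simp only [binEnt, binEntropy, logb, log_inv]
  ring

lemma sqrt_one_sub_sq_mem_Ioo {u : ℝ} (hu₀ : u ≠ 0) (hu₁ : |u| < 1) :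
    √(1 - u ^ 2) ∈ Ioo 0 1 := by
  have h₀ : 0 < u ^ 2 := by positivity
  have h₁ : u ^ 2 < 1 := (sq_lt_one_iff_abs_lt_one u).2 hu₁
  exact ⟨sqrt_pos.2 (by linarith), (sqrt_lt' one_pos).2 (by linarith)⟩

lemma hasDerivAt_sqrt_one_sub_sq {u : ℝ} (hu : |u| < 1) :
    HasDerivAt (fun y ↦ √(1 - y ^ 2)) (-u / √(1 - u ^ 2)) u := by
  have h : 1 - u ^ 2 ≠ 0 := by nlinarith [(sq_lt_one_iff_abs_lt_one u).2 hu]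
  convert! ((hasDerivAt_pow 2 u).const_sub 1).sqrt h using 1
  field_simp
  ring

noncomputable def phiDeriv (u : ℝ) : ℝ :=
  u * artanh √(1 - u ^ 2) / (√(1 - u ^ 2) * log 2)

lemma hasDerivAt_phi {u : ℝ} (hu₀ : u ≠ 0) (hu₁ : |u| < 1) :
    HasDerivAt phi (phiDeriv u) u := by
  obtain ⟨hs₀, hs₁⟩ := sqrt_one_sub_sq_mem_Ioo hu₀ hu₁
  have hq : HasDerivAt (fun y ↦ (1 - √(1 - y ^ 2)) / 2) (u / (2 * √(1 - u ^ 2))) u := by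
    convert! ((hasDerivAt_sqrt_one_sub_sq hu₁).const_sub 1).div_const 2 using 1
    field_simp
  have hH := (hasDerivAt_binEntropy_one_sub_div_two ⟨by linarith, hs₁⟩).comp u hq
  convert! hH.div_const (log 2) using 1
  · funext y
    simp [phi, binEnt_eq_binEntropy_div]
  · unfold phiDeriv
    field_simp

lemma hasDerivAt_phiDeriv {u : ℝ} (hu₀ : u ≠ 0) (hu₁ : |u| < 1) :
    HasDerivAt phiDeriv
      ((artanh √(1 - u ^ 2) - √(1 - u ^ 2)) / (√(1 - u ^ 2) ^ 3 * log 2)) u := by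
  obtain ⟨hs₀, hs₁⟩ := sqrt_one_sub_sq_mem_Ioo hu₀ hu₁
  have hsq : √(1 - u ^ 2) ^ 2 = 1 - u ^ 2 :=
    sq_sqrt (by linarith [(sq_lt_one_iff_abs_lt_one u).2 hu₁])
  have hsqrt := hasDerivAt_sqrt_one_sub_sq hu₁
  have hartanh := (hasDerivAt_artanh ⟨by linarith, hs₁⟩).comp u hsqrt
  convert! ((hasDerivAt_id u).mul hartanh).div (hsqrt.mul_const (log 2)) (by positivity) using 1
  simp only [Pi.mul_apply, Function.comp_apply, id]
  rw [hsq, sub_sub_cancel]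
  field_simp
  linear_combination (-artanh √(1 - u ^ 2)) * hsq

lemma iteratedDeriv_two_phi {u : ℝ} (hu₀ : u ≠ 0) (hu₁ : |u| < 1) :
    iteratedDeriv 2 phi u =
      (artanh √(1 - u ^ 2) - √(1 - u ^ 2)) / (√(1 - u ^ 2) ^ 3 * log 2) := by
  have hopen : IsOpen {y : ℝ | y ≠ 0 ∧ |y| < 1} :=
    isOpen_ne.inter (isOpen_lt continuous_abs continuous_const)
  have hderiv : deriv phi =ᶠ[𝓝 u] phiDeriv := by
    filter_upwards [hopen.mem_nhds ⟨hu₀, hu₁⟩] with y hy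
    exact (hasDerivAt_phi hy.1 hy.2).deriv
  rw [iteratedDeriv_succ, iteratedDeriv_one, hderiv.deriv_eq, (hasDerivAt_phiDeriv hu₀ hu₁).deriv]

theorem phi_second_deriv_bounds (u : ℝ) (hu : u ∈ Set.Ioo (0:ℝ) 1) :
    0 < iteratedDeriv 2 phi u ∧ iteratedDeriv 2 phi u < deriv phi u / u := by
  have hu₀ : u ≠ 0 := hu.1.ne'
  have hu₁ : |u| < 1 := abs_lt.2 ⟨by linarith [hu.1], hu.2⟩
  obtain ⟨hs₀, hs₁⟩ := sqrt_one_sub_sq_mem_Ioo hu₀ hu₁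
  rw [iteratedDeriv_two_phi hu₀ hu₁, (hasDerivAt_phi hu₀ hu₁).deriv, phiDeriv]
  set s := √(1 - u ^ 2)
  have hartanh : artanh s * (1 - s ^ 2) < s :=
    (lt_div_iff₀ (by nlinarith)).1 (artanh_lt_div hs₀ hs₁)
  constructor
  · exact div_pos (sub_pos.2 (lt_artanh hs₀ hs₁)) (by positivity)
  · calc (artanh s - s) / (s ^ 3 * log 2) < artanh s * s ^ 2 / (s ^ 3 * log 2) := by
          gcongr
          linarith
      _ = u * artanh s / (s * log 2) / u := by field_simp
end

section
/- For all q ∈ [0,1], H(q) ≤ 2√(q(1-q)), with equality if and only if q ∈ {0, 1/2, 1}. -/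
open Real

/-!
Work in nats, where the claim reads `binEntropy p < 2 log 2 √(p (1 - p))` for `p ∉ {0, 1/2, 1}`.
Near `1/2`, Pinsker's inequality `binEntropy p < log 2 - 2 (p - 1/2)²` is strong enough precisely
while `(p - 1/2)² ≤ log 2 - (log 2)²`. Beyond that, `-x log x < √x (1 - x)` (which is `t < sinh t`
for `x = e^{-2t}`) gives `binEntropy p < √p √(1 - p) (√p + √(1 - p))`, and there
`√p + √(1 - p) ≤ 2 log 2` because `log 2 ≥ 1/2`.
-/

open Set

namespace Real

lemma two_mul_lt_log_one_add_sub_log_one_sub {y : ℝ} (h0 : 0 < y) (h1 : y < 1) :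
    2 * y < log (1 + y) - log (1 - y) := by
  have hsum := hasSum_log_sub_log_of_abs_lt_one (abs_lt.2 ⟨by linarith, h1⟩)
  have hle := sum_le_hasSum (Finset.range 2) (fun k _ ↦ by positivity) hsum
  norm_num [Finset.sum_range_succ] at hle
  nlinarith [pow_pos h0 3]

lemma negMulLog_lt_sqrt_mul_one_sub {p : ℝ} (h0 : 0 < p) (h1 : p < 1) :
    negMulLog p < √p * (1 - p) := by
  obtain ⟨s, hs0, rfl⟩ : ∃ s, 0 < s ∧ s ^ 2 = p := ⟨√p, sqrt_pos.2 h0, sq_sqrt h0.le⟩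
  have hs1 : s < 1 := by nlinarith
  have hlt : -log s < (s⁻¹ - s) / 2 := by
    simpa [sinh_eq, exp_neg, exp_log hs0] using self_lt_sinh_iff.2 (neg_pos.2 (log_neg hs0 hs1))
  rw [sqrt_sq hs0.le, negMulLog, log_pow]
  push_cast
  nlinarith [mul_lt_mul_of_pos_left hlt (by positivity : 0 < 2 * s ^ 2), mul_inv_cancel₀ hs0.ne']

lemma binEntropy_add_two_mul_sq_strictAntiOn :
    StrictAntiOn (fun p ↦ binEntropy p + 2 * (p - 2⁻¹) ^ 2) (Icc 2⁻¹ 1) := by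
  refine strictAntiOn_of_deriv_neg (convex_Icc _ _) (by fun_prop) fun x hx ↦ ?_
  rw [interior_Icc] at hx
  obtain ⟨hx0, hx1⟩ := hx
  have hd : HasDerivAt (fun p ↦ binEntropy p + 2 * (p - 2⁻¹) ^ 2)
      (log (1 - x) - log x + 4 * (x - 2⁻¹)) x :=
    ((hasDerivAt_binEntropy (by linarith) (by linarith)).add
      ((((hasDerivAt_id x).sub_const 2⁻¹).pow 2).const_mul 2)).congr_deriv (by simp; ring)
  rw [hd.deriv]
  have h := two_mul_lt_log_one_add_sub_log_one_sub (y := 2 * x - 1) (by linarith) (by linarith)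
  rw [show 1 + (2 * x - 1) = 2 * x by ring, show 1 - (2 * x - 1) = 2 * (1 - x) by ring,
    log_mul two_ne_zero (by linarith), log_mul two_ne_zero (by linarith)] at h
  linarith

lemma binEntropy_lt_log_two_sub_two_mul_sq {p : ℝ} (h0 : 0 ≤ p) (h1 : p ≤ 1) (hp : p ≠ 2⁻¹) :
    binEntropy p < log 2 - 2 * (p - 2⁻¹) ^ 2 := by
  wlog hp' : 2⁻¹ < p generalizing p
  · have := this (p := 1 - p) (by linarith) (by linarith) (by contrapose! hp; linarith)
      (by linarith [lt_of_le_of_ne (not_lt.1 hp') hp])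
    rw [binEntropy_one_sub] at this
    linarith [show (1 - p - 2⁻¹) ^ 2 = (p - 2⁻¹) ^ 2 by ring]
  have := binEntropy_add_two_mul_sq_strictAntiOn ⟨le_refl _, by norm_num⟩ ⟨hp'.le, h1⟩ hp'
  simp only [sub_self, binEntropy_two_inv] at this
  linarith

lemma sub_two_mul_sq_le_two_mul_mul_sqrt {L p : ℝ} (hL : 0 < L)
    (h : (p - 2⁻¹) ^ 2 ≤ L - L ^ 2) : L - 2 * (p - 2⁻¹) ^ 2 ≤ 2 * L * √(p * (1 - p)) := by
  have : (L - 2 * (p - 2⁻¹) ^ 2) / (2 * L) ≤ √(p * (1 - p)) := by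
    refine le_sqrt_of_sq_le ?_
    rw [div_pow, div_le_iff₀ (by positivity)]
    nlinarith [mul_nonneg (sq_nonneg (p - 2⁻¹)) (sub_nonneg.2 h)]
  rwa [div_le_iff₀' (by positivity)] at this

lemma sqrt_add_sqrt_one_sub_le {L p : ℝ} (hL : 2⁻¹ ≤ L) (h0 : 0 ≤ p) (h1 : p ≤ 1)
    (h : L - L ^ 2 ≤ (p - 2⁻¹) ^ 2) : √p + √(1 - p) ≤ 2 * L := by
  have hs := sq_sqrt h0
  have ht := sq_sqrt (sub_nonneg.2 h1)
  have hst : √p * √(1 - p) ≤ L - 2⁻¹ := by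
    rw [← sqrt_mul h0, ← sqrt_sq (by linarith : 0 ≤ L - 2⁻¹)]
    exact sqrt_le_sqrt (by nlinarith)
  nlinarith [sqrt_nonneg p, sqrt_nonneg (1 - p)]

lemma binEntropy_lt_sqrt_mul_sqrt_mul {p : ℝ} (h0 : 0 < p) (h1 : p < 1) :
    binEntropy p < √p * √(1 - p) * (√p + √(1 - p)) := by
  have hp := negMulLog_lt_sqrt_mul_one_sub h0 h1
  have hq := negMulLog_lt_sqrt_mul_one_sub (p := 1 - p) (by linarith) (by linarith)
  rw [sub_sub_cancel] at hq
  rw [binEntropy_eq_negMulLog_add_negMulLog_one_sub]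
  calc negMulLog p + negMulLog (1 - p) < √p * (1 - p) + √(1 - p) * p := add_lt_add hp hq
    _ = √p * √(1 - p) * (√p + √(1 - p)) := by
      linear_combination -(√p * sq_sqrt (sub_nonneg.2 h1.le)) - √(1 - p) * sq_sqrt h0.le

lemma binEntropy_lt_two_mul_log_two_mul_sqrt {p : ℝ} (h0 : 0 < p) (h1 : p < 1) (hp : p ≠ 2⁻¹) :
    binEntropy p < 2 * log 2 * √(p * (1 - p)) := by
  have hL : 2⁻¹ < log 2 := lt_trans (by norm_num) log_two_gt_d9
  rcases le_total ((p - 2⁻¹) ^ 2) (log 2 - log 2 ^ 2) with h | h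
  · calc binEntropy p < log 2 - 2 * (p - 2⁻¹) ^ 2 :=
          binEntropy_lt_log_two_sub_two_mul_sq h0.le h1.le hp
      _ ≤ 2 * log 2 * √(p * (1 - p)) := sub_two_mul_sq_le_two_mul_mul_sqrt (by linarith) h
  · calc binEntropy p < √p * √(1 - p) * (√p + √(1 - p)) := binEntropy_lt_sqrt_mul_sqrt_mul h0 h1
      _ ≤ √p * √(1 - p) * (2 * log 2) := by
          gcongr
          exact sqrt_add_sqrt_one_sub_le hL.le h0.le h1.le h
      _ = 2 * log 2 * √(p * (1 - p)) := by rw [sqrt_mul h0.le]; ring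

end Real

lemma binEnt_eq_binEntropy_div_log_two (q : ℝ) : binEnt q = binEntropy q / log 2 := by
  simp only [binEnt, binEntropy, logb, log_inv]
  ring

lemma binEnt_eq_Bh {q : ℝ} (hq : q = 0 ∨ q = 1 / 2 ∨ q = 1) : binEnt q = Bh q := by
  rcases hq with rfl | rfl | rfl
  · simp [binEnt_eq_binEntropy_div_log_two, Bh]
  · have : √((1 / 2 : ℝ) * (1 - 1 / 2)) = 1 / 2 := by
      rw [show (1 / 2 : ℝ) * (1 - 1 / 2) = (1 / 2) ^ 2 by norm_num, sqrt_sq (by norm_num)]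
    rw [binEnt_eq_binEntropy_div_log_two, Bh, this, one_div, binEntropy_two_inv,
      div_self (log_pos one_lt_two).ne']
    norm_num
  · simp [binEnt_eq_binEntropy_div_log_two, Bh]

lemma binEnt_lt_Bh {q : ℝ} (h0 : 0 < q) (h1 : q < 1) (hq : q ≠ 1 / 2) : binEnt q < Bh q := by
  rw [binEnt_eq_binEntropy_div_log_two, div_lt_iff₀ (log_pos one_lt_two), Bh]
  linarith [binEntropy_lt_two_mul_log_two_mul_sqrt h0 h1 (by rwa [← one_div])]

theorem binEnt_le_Bh (q : ℝ) (hq : q ∈ Set.Icc (0:ℝ) 1) :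
    binEnt q ≤ 2 * Real.sqrt (q * (1 - q)) ∧
    (binEnt q = 2 * Real.sqrt (q * (1 - q)) ↔ q = 0 ∨ q = 1/2 ∨ q = 1) := by
  by_cases hq' : q = 0 ∨ q = 1 / 2 ∨ q = 1
  · have heq := binEnt_eq_Bh hq'
    exact ⟨heq.le, iff_of_true heq hq'⟩
  · push Not at hq'
    obtain ⟨hq0, hq2, hq1⟩ := hq'
    have hlt := binEnt_lt_Bh (hq.1.lt_of_ne' hq0) (hq.2.lt_of_ne hq1) hq2
    exact ⟨hlt.le, iff_of_false hlt.ne (by tauto)⟩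
end

section
/- For a binary-input discrete memoryless channel W (finite output alphabet, W(y|0)+W(y|1) > 0 for all y), I(W) + Z(W)² ≤ 1, with equality if and only if Z(W) ∈ {0,1}. -/
open Real

variable {Y : Type*} [Fintype Y]

noncomputable def symCap (W : Fin 2 → Y → ℝ) : ℝ :=
  ∑ y, ∑ x : Fin 2,
    (1/2) * W x y * Real.logb 2 (W x y / ((1/2) * W 0 y + (1/2) * W 1 y))

noncomputable def bhat (W : Fin 2 → Y → ℝ) : ℝ := ∑ y, Real.sqrt (W 0 y * W 1 y)


/-!
Fix an output `y` and write `a = W(y|0) = m(1 + t)`, `b = W(y|1) = m(1 - t)` with `m = (a + b)/2`.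
The contribution of `y` to `I(W)` plus the harmonic mean `2ab/(a + b) = m(1 - t²)` falls short of
the arithmetic mean `m` by `m/(2 log 2) · entropyGap t`, and `entropyGap t ≥ 0` is the inequality
`h(p) ≥ 4p(1 - p)` for the binary entropy in bits, with equality only at `p ∈ {0, 1/2, 1}`.
Summing over `y` gives `I(W) + ∑ HM ≤ 1`. For two numbers `GM² = AM · HM`, so Cauchy–Schwarz gives
`Z(W)² = (∑ GM)² ≤ (∑ AM)(∑ HM) = ∑ HM`. At equality every output has `ab = 0` or `a = b`, where
`GM = HM`; hence `Z = ∑ HM = Z²`.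
-/

open Set

/-- `entropyGap t / (2 log 2) = h((1 + t)/2) - (1 - t²)`, with `h` the binary entropy in bits. -/
noncomputable def entropyGap (t : ℝ) : ℝ :=
  2 * log 2 * t ^ 2 - ((1 + t) * log (1 + t) + (1 - t) * log (1 - t))

noncomputable def entropyGapDeriv (t : ℝ) : ℝ :=
  4 * log 2 * t - log (1 + t) + log (1 - t)

lemma one_lt_two_mul_log_two : 1 < 2 * log 2 := by
  linarith [Real.log_two_gt_d9]

section EntropyGap

variable {t : ℝ}

lemma entropyGap_zero : entropyGap 0 = 0 := by simp [entropyGap]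

lemma entropyGap_one : entropyGap 1 = 0 := by norm_num [entropyGap]

lemma entropyGapDeriv_zero : entropyGapDeriv 0 = 0 := by simp [entropyGapDeriv]

lemma entropyGap_abs (t : ℝ) : entropyGap |t| = entropyGap t := by
  rcases abs_choice t with h | h <;> rw [h]
  simp only [entropyGap]
  ring_nf

lemma continuous_entropyGap : Continuous entropyGap := by
  have hplus := Real.continuous_mul_log.comp (continuous_const_add (1 : ℝ))
  have hminus := Real.continuous_mul_log.comp (continuous_sub_left (1 : ℝ))
  exact (continuous_const.mul (continuous_pow 2)).sub (hplus.add hminus)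

lemma hasDerivAt_entropyGap (h₀ : -1 < t) (h₁ : t < 1) :
    HasDerivAt entropyGap (entropyGapDeriv t) t := by
  have hplus := (Real.hasDerivAt_mul_log (by linarith : 1 + t ≠ 0)).comp t
    ((hasDerivAt_id t).const_add 1)
  have hminus := (Real.hasDerivAt_mul_log (by linarith : 1 - t ≠ 0)).comp t
    ((hasDerivAt_id t).const_sub 1)
  exact (((hasDerivAt_pow 2 t).const_mul (2 * log 2)).sub (hplus.add hminus)).congr_deriv
    (by simp only [entropyGapDeriv]; push_cast; ring)

lemma hasDerivAt_entropyGapDeriv (h₀ : -1 < t) (h₁ : t < 1) :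
    HasDerivAt entropyGapDeriv (4 * log 2 - 2 / (1 - t ^ 2)) t := by
  have hplus := (Real.hasDerivAt_log (by linarith : 1 + t ≠ 0)).comp t
    ((hasDerivAt_id t).const_add 1)
  have hminus := (Real.hasDerivAt_log (by linarith : 1 - t ≠ 0)).comp t
    ((hasDerivAt_id t).const_sub 1)
  refine ((((hasDerivAt_id t).const_mul (4 * log 2)).sub hplus).add hminus).congr_deriv ?_
  have : 1 + t ≠ 0 := by linarith
  have : 1 - t ≠ 0 := by linarith
  have : 1 - t ^ 2 ≠ 0 := by nlinarith
  field_simp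
  ring

lemma entropyGap_deriv2_pos_iff (ht : t ^ 2 < 1) :
    0 < 4 * log 2 - 2 / (1 - t ^ 2) ↔ t ^ 2 < 1 - 1 / (2 * log 2) := by
  have hlog := one_lt_two_mul_log_two
  rw [sub_pos, div_lt_iff₀ (by linarith), lt_sub_comm, div_lt_iff₀ (by linarith)]
  constructor <;> intro h <;> linarith

/- On this range `entropyGapDeriv` increases from `entropyGapDeriv 0 = 0`, so `entropyGap`
increases from `entropyGap 0 = 0`. -/
lemma entropyGap_pos_of_sq_le (h₀ : 0 < t) (ht : t ^ 2 ≤ 1 - 1 / (2 * log 2)) :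
    0 < entropyGap t := by
  have ht₁ : t < 1 := by
    nlinarith [one_div_pos.2 (zero_lt_one.trans one_lt_two_mul_log_two)]
  have hmem : ∀ s ∈ Icc 0 t, -1 < s ∧ s < 1 :=
    fun s hs => ⟨by linarith [hs.1], hs.2.trans_lt ht₁⟩
  have hderiv : StrictMonoOn entropyGapDeriv (Icc 0 t) := by
    refine strictMonoOn_of_hasDerivWithinAt_pos (convex_Icc 0 t)
      (f' := fun s => 4 * log 2 - 2 / (1 - s ^ 2))
      (fun s hs => (hasDerivAt_entropyGapDeriv (hmem s hs).1 (hmem s hs).2).continuousAt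
        |>.continuousWithinAt)
      (fun s hs => ?_) (fun s hs => ?_) <;> rw [interior_Icc] at hs
    · exact (hasDerivAt_entropyGapDeriv (by linarith [hs.1]) (by linarith [hs.2]))
        |>.hasDerivWithinAt
    · exact (entropyGap_deriv2_pos_iff (by nlinarith [hs.1, hs.2])).2 (by nlinarith [hs.1, hs.2])
  have hgap : StrictMonoOn entropyGap (Icc 0 t) := by
    refine strictMonoOn_of_hasDerivWithinAt_pos (convex_Icc 0 t)
      continuous_entropyGap.continuousOn (f' := entropyGapDeriv)
      (fun s hs => ?_) (fun s hs => ?_) <;> rw [interior_Icc] at hs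
    · exact (hasDerivAt_entropyGap (by linarith [hs.1]) (by linarith [hs.2])).hasDerivWithinAt
    · simpa [entropyGapDeriv_zero] using
        hderiv (left_mem_Icc.2 h₀.le) (Ioo_subset_Icc_self hs) hs.1
  simpa [entropyGap_zero] using hgap (left_mem_Icc.2 h₀.le) (right_mem_Icc.2 h₀.le) h₀

/- Past `c = √(1 - 1/(2 log 2))` the function is concave, positive at `c` and zero at `1`. -/
lemma entropyGap_pos (h₀ : 0 < t) (h₁ : t < 1) : 0 < entropyGap t := by
  set κ := 1 - 1 / (2 * log 2)
  rcases le_or_gt (t ^ 2) κ with ht | ht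
  · exact entropyGap_pos_of_sq_le h₀ ht
  have hκ : 0 < κ := by
    have := one_lt_two_mul_log_two
    rw [sub_pos, div_lt_one (by linarith)]
    exact this
  set c := √κ
  have hc₀ : 0 < c := Real.sqrt_pos.2 hκ
  have hct : c < t := (Real.sqrt_lt' h₀).2 ht
  have hconc : ConcaveOn ℝ (Icc c 1) entropyGap := by
    refine concaveOn_of_hasDerivWithinAt2_nonpos (convex_Icc c 1)
      continuous_entropyGap.continuousOn (f' := entropyGapDeriv)
      (f'' := fun s => 4 * log 2 - 2 / (1 - s ^ 2)) (fun s hs => ?_) (fun s hs => ?_)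
      (fun s hs => ?_) <;> rw [interior_Icc] at hs
    · exact (hasDerivAt_entropyGap (by linarith [hs.1]) hs.2).hasDerivWithinAt
    · exact (hasDerivAt_entropyGapDeriv (by linarith [hs.1]) hs.2).hasDerivWithinAt
    · refine not_lt.1 fun hpos => ?_
      have hs_sq := (entropyGap_deriv2_pos_iff (by nlinarith [hs.1, hs.2])).1 hpos
      have hcs : c ^ 2 < s ^ 2 := by nlinarith [hs.1]
      rw [Real.sq_sqrt hκ.le] at hcs
      linarith
  have hgap_c : 0 < entropyGap c := entropyGap_pos_of_sq_le hc₀ (Real.sq_sqrt hκ.le).le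
  rcases lt_or_ge (entropyGap t) (entropyGap c) with hlt | hge
  · have hseg : t ∈ openSegment ℝ 1 c := by
      rw [openSegment_symm, openSegment_eq_Ioo (hct.trans h₁)]
      exact ⟨hct, h₁⟩
    simpa [entropyGap_one] using
      hconc.left_lt_of_lt_right (right_mem_Icc.2 (hct.trans h₁).le)
        (left_mem_Icc.2 (hct.trans h₁).le) hseg hlt
  · linarith

lemma entropyGap_eq_zero_iff (ht : |t| ≤ 1) : entropyGap t = 0 ↔ t = 0 ∨ |t| = 1 := by
  rw [← entropyGap_abs]
  refine ⟨fun h => ?_, ?_⟩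
  · by_contra hne
    obtain ⟨h₀, h₁⟩ := not_or.1 hne
    exact (entropyGap_pos (abs_pos.2 h₀) (ht.lt_of_ne h₁)).ne' h
  · rintro (rfl | h)
    · rw [abs_zero, entropyGap_zero]
    · rw [h, entropyGap_one]

lemma entropyGap_nonneg (ht : |t| ≤ 1) : 0 ≤ entropyGap t := by
  by_cases h : t = 0 ∨ |t| = 1
  · exact ((entropyGap_eq_zero_iff ht).2 h).ge
  · obtain ⟨h₀, h₁⟩ := not_or.1 h
    rw [← entropyGap_abs]
    exact (entropyGap_pos (abs_pos.2 h₀) (ht.lt_of_ne h₁)).le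

end EntropyGap

noncomputable def symCapTerm (a b : ℝ) : ℝ :=
  1 / 2 * a * logb 2 (a / ((a + b) / 2)) + 1 / 2 * b * logb 2 (b / ((a + b) / 2))

section TwoNumbers

variable {a b : ℝ}

lemma sqrt_mul_le_add_div_two (ha : 0 ≤ a) (hb : 0 ≤ b) : √(a * b) ≤ (a + b) / 2 :=
  Real.sqrt_le_iff.2 ⟨by linarith, by nlinarith [sq_nonneg (a - b)]⟩

lemma eq_of_sqrt_mul_eq_add_div_two (ha : 0 ≤ a) (hb : 0 ≤ b)
    (h : √(a * b) = (a + b) / 2) : a = b := by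
  have hsq := Real.sq_sqrt (mul_nonneg ha hb)
  rw [h] at hsq
  nlinarith [sq_nonneg (a - b)]

lemma abs_sub_div_add_le_one (ha : 0 ≤ a) (hb : 0 ≤ b) (hab : 0 < a + b) :
    |(a - b) / (a + b)| ≤ 1 := by
  rw [abs_div, abs_of_pos hab, div_le_one hab, abs_sub_le_iff]
  constructor <;> linarith

lemma symCapTerm_add_harmonic_mean (hab : 0 < a + b) :
    symCapTerm a b + 2 * a * b / (a + b) =
      (a + b) / 2 - (a + b) / (4 * log 2) * entropyGap ((a - b) / (a + b)) := by
  have ha : a / ((a + b) / 2) = 1 + (a - b) / (a + b) := by field_simp; ring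
  have hb : b / ((a + b) / 2) = 1 - (a - b) / (a + b) := by field_simp; ring
  rw [symCapTerm, ha, hb, entropyGap, logb, logb]
  field_simp
  ring

lemma symCapTerm_add_harmonic_mean_le (ha : 0 ≤ a) (hb : 0 ≤ b) (hab : 0 < a + b) :
    symCapTerm a b + 2 * a * b / (a + b) ≤ (a + b) / 2 := by
  have := one_lt_two_mul_log_two
  rw [symCapTerm_add_harmonic_mean hab, sub_le_self_iff]
  exact mul_nonneg (div_nonneg hab.le (by linarith))
    (entropyGap_nonneg (abs_sub_div_add_le_one ha hb hab))

lemma symCapTerm_add_harmonic_mean_eq_iff (ha : 0 ≤ a) (hb : 0 ≤ b) (hab : 0 < a + b) :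
    symCapTerm a b + 2 * a * b / (a + b) = (a + b) / 2 ↔ a * b = 0 ∨ a = b := by
  have := one_lt_two_mul_log_two
  rw [symCapTerm_add_harmonic_mean hab, sub_eq_self, mul_eq_zero,
    or_iff_right (div_pos hab (by linarith)).ne',
    entropyGap_eq_zero_iff (abs_sub_div_add_le_one ha hb hab), div_eq_zero_iff,
    or_iff_left hab.ne', sub_eq_zero, abs_div, abs_of_pos hab, div_eq_one_iff_eq hab.ne',
    abs_eq hab.le, mul_eq_zero]
  have hb₀ : a - b = a + b ↔ b = 0 := by constructor <;> intro h <;> linarith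
  have ha₀ : a - b = -(a + b) ↔ a = 0 := by constructor <;> intro h <;> linarith
  rw [hb₀, ha₀]
  tauto

end TwoNumbers

noncomputable def harmonicMeanSum (W : Fin 2 → Y → ℝ) : ℝ :=
  ∑ y, 2 * W 0 y * W 1 y / (W 0 y + W 1 y)

section Channel

variable {W : Fin 2 → Y → ℝ}

lemma symCap_eq_sum_symCapTerm : symCap W = ∑ y, symCapTerm (W 0 y) (W 1 y) := by
  refine Finset.sum_congr rfl fun y _ => ?_
  rw [Fin.sum_univ_two, symCapTerm,
    show 1 / 2 * W 0 y + 1 / 2 * W 1 y = (W 0 y + W 1 y) / 2 by ring]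

lemma sum_add_div_two (hsum : ∀ x, ∑ y, W x y = 1) : ∑ y, (W 0 y + W 1 y) / 2 = 1 := by
  rw [← Finset.sum_div, Finset.sum_add_distrib, hsum, hsum]
  norm_num

lemma symCap_add_harmonicMeanSum :
    symCap W + harmonicMeanSum W =
      ∑ y, (symCapTerm (W 0 y) (W 1 y) + 2 * W 0 y * W 1 y / (W 0 y + W 1 y)) := by
  rw [symCap_eq_sum_symCapTerm, harmonicMeanSum, Finset.sum_add_distrib]

lemma symCap_add_harmonicMeanSum_le (hnn : ∀ x y, 0 ≤ W x y) (hsum : ∀ x, ∑ y, W x y = 1)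
    (hpos : ∀ y, 0 < W 0 y + W 1 y) : symCap W + harmonicMeanSum W ≤ 1 := by
  rw [symCap_add_harmonicMeanSum, ← sum_add_div_two hsum]
  exact Finset.sum_le_sum fun y _ => symCapTerm_add_harmonic_mean_le (hnn 0 y) (hnn 1 y) (hpos y)

lemma symCap_add_harmonicMeanSum_eq_one_iff (hnn : ∀ x y, 0 ≤ W x y)
    (hsum : ∀ x, ∑ y, W x y = 1) (hpos : ∀ y, 0 < W 0 y + W 1 y) :
    symCap W + harmonicMeanSum W = 1 ↔ ∀ y, W 0 y * W 1 y = 0 ∨ W 0 y = W 1 y := by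
  rw [symCap_add_harmonicMeanSum, ← sum_add_div_two hsum, Finset.sum_eq_sum_iff_of_le
    fun y _ => symCapTerm_add_harmonic_mean_le (hnn 0 y) (hnn 1 y) (hpos y)]
  simp only [Finset.mem_univ, true_imp_iff,
    symCapTerm_add_harmonic_mean_eq_iff (hnn 0 _) (hnn 1 _) (hpos _)]

lemma bhat_sq_le_harmonicMeanSum (hnn : ∀ x y, 0 ≤ W x y) (hsum : ∀ x, ∑ y, W x y = 1)
    (hpos : ∀ y, 0 < W 0 y + W 1 y) : bhat W ^ 2 ≤ harmonicMeanSum W := by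
  have := Finset.sq_sum_div_le_sum_sq_div Finset.univ (fun y => √(W 0 y * W 1 y))
    (g := fun y => (W 0 y + W 1 y) / 2) fun y _ => half_pos (hpos y)
  rw [sum_add_div_two hsum, div_one] at this
  refine this.trans_eq (Finset.sum_congr rfl fun y _ => ?_)
  rw [Real.sq_sqrt (mul_nonneg (hnn 0 y) (hnn 1 y))]
  field_simp

lemma bhat_eq_harmonicMeanSum (hnn : ∀ x y, 0 ≤ W x y)
    (h : ∀ y, W 0 y * W 1 y = 0 ∨ W 0 y = W 1 y) : bhat W = harmonicMeanSum W := by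
  refine Finset.sum_congr rfl fun y _ => ?_
  rcases h y with h | h
  · rw [h, mul_assoc, h]
    simp
  · rw [← h, Real.sqrt_mul_self (hnn 0 y)]
    rcases eq_or_ne (W 0 y) 0 with h₀ | h₀
    · simp [h₀]
    · field_simp
      ring

lemma bhat_eq_zero_iff (hnn : ∀ x y, 0 ≤ W x y) : bhat W = 0 ↔ ∀ y, W 0 y * W 1 y = 0 := by
  rw [bhat, Finset.sum_eq_zero_iff_of_nonneg fun y _ => Real.sqrt_nonneg _]
  simp only [Finset.mem_univ, true_imp_iff, Real.sqrt_eq_zero (mul_nonneg (hnn 0 _) (hnn 1 _))]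

lemma eq_of_bhat_eq_one (hnn : ∀ x y, 0 ≤ W x y) (hsum : ∀ x, ∑ y, W x y = 1)
    (h : bhat W = 1) (y : Y) : W 0 y = W 1 y := by
  have hgap : ∑ y, ((W 0 y + W 1 y) / 2 - √(W 0 y * W 1 y)) = 0 := by
    rw [Finset.sum_sub_distrib, sum_add_div_two hsum, ← bhat, h, sub_self]
  refine eq_of_sqrt_mul_eq_add_div_two (hnn 0 y) (hnn 1 y) (sub_eq_zero.1 ?_).symm
  exact (Finset.sum_eq_zero_iff_of_nonneg fun y _ => sub_nonneg.2
    (sqrt_mul_le_add_div_two (hnn 0 y) (hnn 1 y))).1 hgap y (Finset.mem_univ y)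

end Channel

theorem I_add_Z_sq_le_one (W : Fin 2 → Y → ℝ)
    (hnn : ∀ x y, 0 ≤ W x y) (hsum : ∀ x, ∑ y, W x y = 1)
    (hpos : ∀ y, 0 < W 0 y + W 1 y) :
    symCap W + (bhat W) ^ 2 ≤ 1 ∧
    (symCap W + (bhat W) ^ 2 = 1 ↔ bhat W = 0 ∨ bhat W = 1) := by
  have hI := symCap_add_harmonicMeanSum_le hnn hsum hpos
  have hZ := bhat_sq_le_harmonicMeanSum hnn hsum hpos
  have hidem : bhat W ^ 2 = bhat W ↔ bhat W = 0 ∨ bhat W = 1 := by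
    rw [sq, ← sub_eq_zero, ← mul_sub_one, mul_eq_zero, sub_eq_zero]
  refine ⟨by linarith, fun heq => ?_, fun h01 => ?_⟩
  · have hP := (symCap_add_harmonicMeanSum_eq_one_iff hnn hsum hpos).1 (by linarith)
    rw [← hidem]
    linarith [bhat_eq_harmonicMeanSum hnn hP]
  · have hP : ∀ y, W 0 y * W 1 y = 0 ∨ W 0 y = W 1 y := by
      rcases h01 with h | h
      · exact fun y => Or.inl ((bhat_eq_zero_iff hnn).1 h y)
      · exact fun y => Or.inr (eq_of_bhat_eq_one hnn hsum h y)
    rw [hidem.2 h01, bhat_eq_harmonicMeanSum hnn hP]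
    exact (symCap_add_harmonicMeanSum_eq_one_iff hnn hsum hpos).2 hP
end

section
/- For a binary-input discrete memoryless channel W (finite output alphabet, W(y|0)+W(y|1) > 0 for all y), I(W)·ln 2 + Z(W) ≤ 1, with equality if and only if Z(W) = 1. -/
open Real

variable {Y : Type*} [Fintype Y]

-- step 1: elementary lemma
lemma twolog_lt (t : ℝ) (ht : 1 < t) : 2 * Real.log t < t - 1/t := by
  have h : StrictMonoOn (fun t : ℝ => t - 1/t - 2 * Real.log t) (Set.Ici 1) := by
    apply strictMonoOn_of_deriv_pos (convex_Ici 1)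
    · apply ContinuousOn.sub
      · exact (continuousOn_id.sub (continuousOn_const.div continuousOn_id
          (fun x hx => by simp at hx; linarith)))
      · exact continuousOn_const.mul (Real.continuousOn_log.mono (fun x hx => by
          simp at hx ⊢; linarith))
    · intro x hx
      rw [interior_Ici] at hx
      simp only [Set.mem_Ioi] at hx
      have hx0 : x ≠ 0 := by linarith
      have hd : HasDerivAt (fun t : ℝ => t - 1/t - 2 * Real.log t)
          (1 - (-(1/x^2)) - 2 * (1/x)) x := by
        have h1 : HasDerivAt (fun t : ℝ => 1/t) (-(1/x^2)) x := by
          simpa using (hasDerivAt_inv hx0)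
        have h2 : HasDerivAt Real.log (1/x) x := by
          simpa using Real.hasDerivAt_log hx0
        exact ((hasDerivAt_id x).sub h1).sub ((h2.const_mul 2))
      rw [hd.deriv]
      have : 1 - (-(1/x^2)) - 2*(1/x) = (1 - 1/x)^2 := by field_simp; ring
      rw [this]
      have h1x : 1/x < 1 := by rw [div_lt_one (by linarith)]; linarith
      have : 0 < 1 - 1/x := by linarith
      positivity
  have := h (Set.self_mem_Ici) (le_of_lt ht : (1:ℝ) ≤ t) ht
  simp at this
  rw [one_div]
  linarith

noncomputable def gfun (p : ℝ) : ℝ := Real.binEntropy p - 2 * Real.sqrt (p * (1 - p))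

lemma gfun_cont : Continuous gfun := by
  unfold gfun
  exact Real.binEntropy_continuous.sub (by fun_prop)

lemma gfun_anti : StrictAntiOn gfun (Set.Icc 0 (1/2 : ℝ)) := by
  apply strictAntiOn_of_deriv_neg (convex_Icc _ _) gfun_cont.continuousOn
  intro x hx
  rw [interior_Icc, Set.mem_Ioo] at hx
  obtain ⟨hx0, hx12⟩ := hx
  have hx1 : x < 1 := by linarith
  have hux : 0 < x * (1 - x) := by nlinarith
  have hsu : 0 < Real.sqrt (x * (1 - x)) := Real.sqrt_pos.mpr hux
  have hd : HasDerivAt gfun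
      ((Real.log (1 - x) - Real.log x) - 2 * (1 / (2 * Real.sqrt (x * (1-x))) * (1 - 2*x))) x := by
    unfold gfun
    apply HasDerivAt.sub
    · exact Real.hasDerivAt_binEntropy (ne_of_gt hx0) (ne_of_lt hx1)
    · have hinner : HasDerivAt (fun p : ℝ => p * (1 - p)) (1 - 2*x) x := by
        have : HasDerivAt (fun p : ℝ => p * (1 - p)) (1 * (1 - x) + x * (-1)) x :=
          (hasDerivAt_id x).mul ((hasDerivAt_id x).const_sub 1)
        convert this using 1; ring
      have := (Real.hasDerivAt_sqrt (ne_of_gt hux)).comp x hinner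
      exact this.const_mul 2
  rw [hd.deriv]
  -- now prove negativity using twolog_lt with t = sqrt((1-x)/x)
  set sx := Real.sqrt x with hsx
  set s1 := Real.sqrt (1 - x) with hs1
  have hsxp : 0 < sx := Real.sqrt_pos.mpr hx0
  have hs1p : 0 < s1 := Real.sqrt_pos.mpr (by linarith)
  have hsxsq : sx^2 = x := Real.sq_sqrt hx0.le
  have hs1sq : s1^2 = 1 - x := Real.sq_sqrt (by linarith)
  have hmul : Real.sqrt (x * (1 - x)) = sx * s1 := Real.sqrt_mul hx0.le _
  have ht1 : 1 < s1 / sx := by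
    rw [lt_div_iff₀ hsxp, one_mul]
    exact Real.sqrt_lt_sqrt hx0.le (by linarith)
  have hkey := twolog_lt (s1/sx) ht1
  have hlog : Real.log (s1/sx) = (Real.log (1-x) - Real.log x) / 2 := by
    rw [Real.log_div (ne_of_gt hs1p) (ne_of_gt hsxp), Real.log_sqrt (by linarith : (0:ℝ) ≤ 1 - x),
      Real.log_sqrt hx0.le]
    ring
  have hsub : s1/sx - 1/(s1/sx) = (1 - 2*x) / (sx * s1) := by
    rw [one_div_div]
    field_simp
    nlinarith [hsxsq, hs1sq]
  rw [hlog, hsub] at hkey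
  rw [hmul]
  have h2 : 2 * (1 / (2 * (sx * s1)) * (1 - 2*x)) = (1 - 2*x) / (sx * s1) := by
    field_simp
  rw [h2]
  linarith

lemma gfun_symm (p : ℝ) : gfun (1 - p) = gfun p := by
  unfold gfun
  rw [Real.binEntropy_one_sub]
  ring_nf

lemma gfun_half : gfun (1/2) = Real.log 2 - 1 := by
  unfold gfun
  rw [show (1:ℝ)/2 * (1 - 1/2) = (1/2)^2 by norm_num,
    Real.sqrt_sq (by norm_num : (0:ℝ) ≤ 1/2),
    show (1:ℝ)/2 = 2⁻¹ by norm_num, Real.binEntropy_two_inv]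
  norm_num

-- key lemma
lemma gfun_key (p : ℝ) (h0 : 0 ≤ p) (h1 : p ≤ 1) :
    Real.log 2 - 1 ≤ gfun p ∧ (gfun p = Real.log 2 - 1 ↔ p = 1/2) := by
  have main : ∀ q : ℝ, 0 ≤ q → q ≤ 1 → q ≠ 1/2 → Real.log 2 - 1 < gfun q := by
    intro q hq0 hq1 hqne
    rcases lt_or_gt_of_ne hqne with h | h
    · have := gfun_anti (Set.mem_Icc.mpr ⟨hq0, h.le⟩)
        (Set.mem_Icc.mpr ⟨by norm_num, le_refl _⟩) h
      rw [gfun_half] at this; linarith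
    · have h1q : 1 - q < 1/2 := by linarith
      have := gfun_anti (Set.mem_Icc.mpr ⟨by linarith, h1q.le⟩)
        (Set.mem_Icc.mpr ⟨by norm_num, le_refl _⟩) h1q
      rw [gfun_half, gfun_symm] at this; linarith
  constructor
  · by_cases h : p = 1/2
    · rw [h, gfun_half]
    · exact (main p h0 h1 h).le
  · constructor
    · intro he
      by_contra h
      have := main p h0 h1 h
      linarith
    · intro h; rw [h, gfun_half]




lemma key2 (p : ℝ) (h0 : 0 ≤ p) (h1 : p ≤ 1) :
    p * Real.log (2*p) + (1-p) * Real.log (2*(1-p)) + 2*Real.sqrt (p*(1-p)) ≤ 1 ∧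
    (p * Real.log (2*p) + (1-p) * Real.log (2*(1-p)) + 2*Real.sqrt (p*(1-p)) = 1 ↔ p = 1/2) := by
  have e1 : ∀ q : ℝ, 0 ≤ q → q * Real.log (2*q) = q * Real.log 2 + q * Real.log q := by
    intro q hq
    rcases eq_or_lt_of_le hq with h | h
    · simp [← h]
    · rw [Real.log_mul (by norm_num) (ne_of_gt h)]; ring
  have heq : p * Real.log (2*p) + (1-p) * Real.log (2*(1-p)) + 2*Real.sqrt (p*(1-p))
      = Real.log 2 - gfun p := by
    rw [e1 p h0, e1 (1-p) (by linarith)]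
    unfold gfun Real.binEntropy
    rw [Real.log_inv, Real.log_inv]
    ring
  obtain ⟨hle, hiff⟩ := gfun_key p h0 h1
  rw [heq]
  constructor
  · linarith
  · rw [← hiff]; constructor <;> intro h <;> linarith

lemma perY (a b : ℝ) (ha : 0 ≤ a) (hb : 0 ≤ b) (hab : 0 < a + b) :
    ((1/2)*a*Real.logb 2 (a/((1/2)*a+(1/2)*b)) + (1/2)*b*Real.logb 2 (b/((1/2)*a+(1/2)*b)))
      * Real.log 2 + Real.sqrt (a*b) ≤ (a+b)/2 ∧
    (((1/2)*a*Real.logb 2 (a/((1/2)*a+(1/2)*b)) + (1/2)*b*Real.logb 2 (b/((1/2)*a+(1/2)*b)))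
      * Real.log 2 + Real.sqrt (a*b) = (a+b)/2 ↔ a = b) := by
  set s := a + b with hs
  set p := a / s with hp
  have hsne : s ≠ 0 := ne_of_gt hab
  have hp0 : 0 ≤ p := div_nonneg ha hab.le
  have hp1 : p ≤ 1 := by rw [hp, div_le_one hab]; linarith
  have hA : a = s * p := by rw [hp]; field_simp
  have hB : b = s * (1 - p) := by rw [hp]; field_simp; ring
  have hhalf : (1/2)*a+(1/2)*b = s/2 := by rw [hs]; ring
  have harg1 : a/((1/2)*a+(1/2)*b) = 2*p := by
    rw [hhalf, hA]; field_simp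
  have harg2 : b/((1/2)*a+(1/2)*b) = 2*(1-p) := by
    rw [hhalf, hB]; field_simp
  have hlog2 : Real.log 2 ≠ 0 := ne_of_gt (Real.log_pos (by norm_num))
  have hlb : ∀ z : ℝ, Real.logb 2 z * Real.log 2 = Real.log z := fun z => by
    rw [Real.logb]; field_simp
  have hsqrt : Real.sqrt (a*b) = s * Real.sqrt (p*(1-p)) := by
    rw [hA, hB, show s*p*(s*(1-p)) = s^2*(p*(1-p)) by ring,
      Real.sqrt_mul (sq_nonneg s), Real.sqrt_sq hab.le]
  have hLHS : ((1/2)*a*Real.logb 2 (a/((1/2)*a+(1/2)*b)) + (1/2)*b*Real.logb 2 (b/((1/2)*a+(1/2)*b)))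
      * Real.log 2 + Real.sqrt (a*b)
      = (s/2) * (p * Real.log (2*p) + (1-p) * Real.log (2*(1-p)) + 2*Real.sqrt (p*(1-p))) := by
    rw [harg1, harg2, hsqrt, hA, hB]
    simp only [Real.logb]
    field_simp
  have hiffab : p = 1/2 ↔ a = b := by
    constructor
    · intro h; rw [hA, hB, h]; norm_num
    · intro h
      have : s * p = s * (1 - p) := by rw [← hA, ← hB, h]
      have := mul_left_cancel₀ hsne this
      linarith
  obtain ⟨hle, hiff⟩ := key2 p hp0 hp1
  rw [hLHS]
  have hs2 : 0 < s/2 := by linarith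
  constructor
  · calc (s/2) * (p * Real.log (2*p) + (1-p) * Real.log (2*(1-p)) + 2*Real.sqrt (p*(1-p)))
        ≤ (s/2) * 1 := by apply mul_le_mul_of_nonneg_left hle hs2.le
    _ = (a+b)/2 := by rw [mul_one, hs]
  · constructor
    · intro h
      apply hiffab.mp
      apply hiff.mp
      have h2 : (s/2) * (p * Real.log (2*p) + (1-p) * Real.log (2*(1-p))
          + 2*Real.sqrt (p*(1-p))) = (s/2) * 1 := by rw [h, mul_one]
      exact mul_left_cancel₀ (ne_of_gt hs2) h2
    · intro h
      rw [hiff.mpr (hiffab.mpr h), mul_one]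



lemma amgm (a b : ℝ) (ha : 0 ≤ a) (hb : 0 ≤ b) : Real.sqrt (a*b) ≤ (a+b)/2 := by
  rw [Real.sqrt_mul ha]
  nlinarith [sq_nonneg (Real.sqrt a - Real.sqrt b), Real.sq_sqrt ha, Real.sq_sqrt hb,
    Real.sqrt_nonneg a, Real.sqrt_nonneg b]


theorem I_ln2_add_Z_le_one (W : Fin 2 → Y → ℝ)
    (hnn : ∀ x y, 0 ≤ W x y) (hsum : ∀ x, ∑ y, W x y = 1)
    (hpos : ∀ y, 0 < W 0 y + W 1 y) :
    symCap W * Real.log 2 + bhat W ≤ 1 ∧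
    (symCap W * Real.log 2 + bhat W = 1 ↔ bhat W = 1) := by
  have hperY : ∀ y : Y,
      ((∑ x : Fin 2, (1/2) * W x y * Real.logb 2 (W x y / ((1/2) * W 0 y + (1/2) * W 1 y)))
        * Real.log 2 + Real.sqrt (W 0 y * W 1 y) ≤ (W 0 y + W 1 y)/2) ∧
      ((∑ x : Fin 2, (1/2) * W x y * Real.logb 2 (W x y / ((1/2) * W 0 y + (1/2) * W 1 y)))
        * Real.log 2 + Real.sqrt (W 0 y * W 1 y) = (W 0 y + W 1 y)/2 ↔ W 0 y = W 1 y) := by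
    intro y
    rw [Fin.sum_univ_two]
    exact perY _ _ (hnn 0 y) (hnn 1 y) (hpos y)
  have hrw : symCap W * Real.log 2 + bhat W =
      ∑ y, ((∑ x : Fin 2, (1/2) * W x y * Real.logb 2 (W x y / ((1/2) * W 0 y + (1/2) * W 1 y)))
        * Real.log 2 + Real.sqrt (W 0 y * W 1 y)) := by
    unfold symCap bhat
    rw [Finset.sum_mul, ← Finset.sum_add_distrib]
  have hm : ∑ y, (W 0 y + W 1 y)/2 = 1 := by
    rw [← Finset.sum_div, Finset.sum_add_distrib, hsum 0, hsum 1]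
    norm_num
  have hle' : ∀ y ∈ (Finset.univ : Finset Y),
      (∑ x : Fin 2, (1/2) * W x y * Real.logb 2 (W x y / ((1/2) * W 0 y + (1/2) * W 1 y)))
        * Real.log 2 + Real.sqrt (W 0 y * W 1 y) ≤ (W 0 y + W 1 y)/2 :=
    fun y _ => (hperY y).1
  constructor
  · rw [hrw]
    exact (Finset.sum_le_sum hle').trans (le_of_eq hm)
  constructor
  · intro h
    have heq : ∀ y ∈ (Finset.univ : Finset Y),
        (∑ x : Fin 2, (1/2) * W x y * Real.logb 2 (W x y / ((1/2) * W 0 y + (1/2) * W 1 y)))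
          * Real.log 2 + Real.sqrt (W 0 y * W 1 y) = (W 0 y + W 1 y)/2 :=
      (Finset.sum_eq_sum_iff_of_le hle').mp (by rw [← hrw, h, hm])
    have hab : ∀ y, W 0 y = W 1 y := fun y => (hperY y).2.mp (heq y (Finset.mem_univ y))
    unfold bhat
    calc ∑ y, Real.sqrt (W 0 y * W 1 y) = ∑ y, (W 0 y + W 1 y)/2 := by
          apply Finset.sum_congr rfl
          intro y _
          rw [← hab y, Real.sqrt_mul_self (hnn 0 y)]
          ring
      _ = 1 := hm
  · intro h
    have hle2 : ∀ y ∈ (Finset.univ : Finset Y),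
        Real.sqrt (W 0 y * W 1 y) ≤ (W 0 y + W 1 y)/2 :=
      fun y _ => amgm _ _ (hnn 0 y) (hnn 1 y)
    have heqs : ∀ y ∈ (Finset.univ : Finset Y),
        Real.sqrt (W 0 y * W 1 y) = (W 0 y + W 1 y)/2 := by
      apply (Finset.sum_eq_sum_iff_of_le hle2).mp
      rw [hm]
      exact h
    have hab : ∀ y, W 0 y = W 1 y := by
      intro y
      have hy := heqs y (Finset.mem_univ y)
      have h2 : W 0 y * W 1 y = ((W 0 y + W 1 y)/2)^2 := by
        rw [← hy, Real.sq_sqrt (mul_nonneg (hnn 0 y) (hnn 1 y))]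
      nlinarith [sq_nonneg (W 0 y - W 1 y)]
    rw [hrw]
    calc (∑ y, ((∑ x : Fin 2, (1/2) * W x y * Real.logb 2 (W x y / ((1/2) * W 0 y + (1/2) * W 1 y)))
          * Real.log 2 + Real.sqrt (W 0 y * W 1 y)))
        = ∑ y, (W 0 y + W 1 y)/2 :=
          Finset.sum_congr rfl (fun y _ => (hperY y).2.mpr (hab y))
      _ = 1 := hm
end
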